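/- Let n ≥ 1 and let S ⊆ ZMod n be nonempty with 0 ∉ S, and suppose the translation subgroup T̂ is normal in Aut(Cay(ZMod n, S)). If Cay(ZMod n, S) is R-thick, then Cay(ZMod n, S) is isomorphic to C₄. -/

import Mathlib

/-- A permutation `e` is an automorphism of the digraph with adjacency `Adj`. -/
def IsDigraphAut {V : Type*} (Adj : V → V → Prop) (e : Equiv.Perm V) : Prop :=
  ∀ x y, Adj x y ↔ Adj (e x) (e y)

/-- The automorphism group of a digraph, as a subgroup of the permutation group. -/
def autGroup {V : Type*} (Adj : V → V → Prop) : Subgroup (Equiv.Perm V) where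
  carrier := {e | IsDigraphAut Adj e}
  one_mem' := by intro x y; exact Iff.rfl
  mul_mem' := by
    intro a b ha hb x y
    exact (hb x y).trans (ha (b x) (b y))
  inv_mem' := by
    intro a ha x y
    simpa using (ha (a⁻¹ x) (a⁻¹ y)).symm

/-- A digraph is arc-transitive if its automorphism group is transitive on arcs. -/
def ArcTransitive {V : Type*} (Adj : V → V → Prop) : Prop :=
  ∀ x y u v, Adj x y → Adj u v → ∃ e ∈ autGroup Adj, e x = u ∧ e y = v

/-- A subgroup of the permutation group of `V` is regular on `V`. -/
def IsRegularSub {V : Type*} (H : Subgroup (Equiv.Perm V)) : Prop :=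
  ∀ u v : V, ∃! h : H, (h : Equiv.Perm V) u = v

/-- A circulant: the automorphism group contains a regular cyclic subgroup. -/
def IsCirculant {V : Type*} (Adj : V → V → Prop) : Prop :=
  ∃ H : Subgroup (Equiv.Perm V), H ≤ autGroup Adj ∧ IsCyclic H ∧ IsRegularSub H

/-- A normal circulant: the automorphism group contains a regular cyclic subgroup
that is normal in the automorphism group. -/
def IsNormalCirculant {V : Type*} (Adj : V → V → Prop) : Prop :=
  ∃ H : Subgroup (Equiv.Perm V), H ≤ autGroup Adj ∧ IsCyclic H ∧ IsRegularSub H ∧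
    ∀ e ∈ autGroup Adj, ∀ h ∈ H, e * h * e⁻¹ ∈ H

/-- Tensor (direct) product of digraphs. -/
def tensorAdj {V₁ V₂ : Type*} (Adj₁ : V₁ → V₁ → Prop) (Adj₂ : V₂ → V₂ → Prop) :
    V₁ × V₂ → V₁ × V₂ → Prop :=
  fun p q => Adj₁ p.1 q.1 ∧ Adj₂ p.2 q.2

/-- Lexicographic product `Γ[Kbar_b]` with the edgeless digraph on `b` vertices. -/
def lexAdj {V : Type*} (Adj : V → V → Prop) (b : ℕ) : V × Fin b → V × Fin b → Prop :=
  fun p q => Adj p.1 q.1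

/-- Digraph isomorphism. -/
def DigraphIso {V₁ V₂ : Type*} (Adj₁ : V₁ → V₁ → Prop) (Adj₂ : V₂ → V₂ → Prop) : Prop :=
  ∃ e : V₁ ≃ V₂, ∀ x y, Adj₁ x y ↔ Adj₂ (e x) (e y)

/-- Connectedness: the reflexive–symmetric–transitive closure of adjacency
relates every pair of vertices. -/
def DigraphConnected {V : Type*} (Adj : V → V → Prop) : Prop :=
  ∀ u v : V, Relation.ReflTransGen (fun a b => Adj a b ∨ Adj b a) u v

/-- R-thick digraph: two distinct vertices with the same in- and out-neighbourhoods. -/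
def RThick {V : Type*} (Adj : V → V → Prop) : Prop :=
  ∃ u v : V, u ≠ v ∧ (∀ w, Adj u w ↔ Adj v w) ∧ (∀ w, Adj w u ↔ Adj w v)

/-- The directed 4-cycle on `ZMod 4`. -/
def C4Adj : ZMod 4 → ZMod 4 → Prop := fun x y => y - x = 1 ∨ y - x = 3

/-- Cayley digraph of a group `G` with connection set `S`. -/
def cayAdj (G : Type*) [Group G] (S : Set G) : G → G → Prop :=
  fun x y => y * x⁻¹ ∈ S

/-- The right-regular representation of `G` inside `Equiv.Perm G`. -/
def rightReg (G : Type*) [Group G] : Subgroup (Equiv.Perm G) where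
  carrier := {e | ∃ g : G, ∀ x, e x = x * g}
  one_mem' := ⟨1, by simp⟩
  mul_mem' := by
    rintro a b ⟨g, hg⟩ ⟨h, hh⟩
    exact ⟨h * g, fun x => by simp [Equiv.Perm.mul_apply, hh, hg, mul_assoc]⟩
  inv_mem' := by
    rintro a ⟨g, hg⟩
    refine ⟨g⁻¹, fun x => a.injective ?_⟩
    rw [Equiv.Perm.coe_inv, Equiv.apply_symm_apply, hg]
    simp

/-- Cayley digraph of `ZMod n` with connection set `S`. -/
def zcayAdj (n : ℕ) (S : Set (ZMod n)) : ZMod n → ZMod n → Prop :=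
  fun x y => y - x ∈ S

/-- The translation subgroup of `Equiv.Perm (ZMod n)`. -/
def transSub (n : ℕ) : Subgroup (Equiv.Perm (ZMod n)) where
  carrier := {e | ∃ g : ZMod n, ∀ x, e x = x + g}
  one_mem' := ⟨0, by simp⟩
  mul_mem' := by
    rintro a b ⟨g, hg⟩ ⟨h, hh⟩
    exact ⟨h + g, fun x => by simp [Equiv.Perm.mul_apply, hh, hg, add_assoc]⟩
  inv_mem' := by
    rintro a ⟨g, hg⟩
    refine ⟨-g, fun x => a.injective ?_⟩
    rw [Equiv.Perm.coe_inv, Equiv.apply_symm_apply, hg]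
    simp

/-!
Twin vertices `u ≠ v` make the transposition `(u v)` an automorphism. Conjugating `x ↦ x + 1`
by it yields a map that is a translation only when `n ≤ 4`. Twins also make `S` periodic with
period `u - v ≠ 0`; since `0 ∉ S ≠ ∅`, this period is not a unit, which for `n ≤ 4` leaves only
`n = 4`, period `2`, and `S = {1, 3}`: the directed 4-cycle.
-/

open Equiv

theorem isDigraphAut_swap_of_twins {V : Type*} [DecidableEq V] {Adj : V → V → Prop} {u v : V}
    (hout : ∀ w, Adj u w ↔ Adj v w) (hin : ∀ w, Adj w u ↔ Adj w v) :
    IsDigraphAut Adj (swap u v) := by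
  have hleft : ∀ x y, Adj x y ↔ Adj (swap u v x) y := by
    intro x y
    rw [swap_apply_def]
    split_ifs with hxu hxv
    · exact hxu ▸ hout y
    · exact hxv ▸ (hout y).symm
    · rfl
  have hright : ∀ x y, Adj x y ↔ Adj x (swap u v y) := by
    intro x y
    rw [swap_apply_def]
    split_ifs with hyu hyv
    · exact hyu ▸ hin x
    · exact hyv ▸ (hin x).symm
    · rfl
  exact fun x y => (hleft x y).trans (hright _ y)

theorem periodic_of_zcayAdj_outTwins {n : ℕ} {S : Set (ZMod n)} {u v : ZMod n}
    (hout : ∀ w, zcayAdj n S u w ↔ zcayAdj n S v w) :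
    Function.Periodic (· ∈ S) (u - v) := by
  intro s
  have h := hout (s + u)
  simp only [zcayAdj, add_sub_cancel_right] at h
  exact propext (by rw [← add_sub_assoc]; exact h.symm)

theorem Function.Periodic.eq_apply_zero_of_isUnit {n : ℕ} {α : Type*} {f : ZMod n → α}
    {d : ZMod n} (hf : Function.Periodic f d) (hd : IsUnit d) (x : ZMod n) : f x = f 0 := by
  obtain ⟨m, hm⟩ := ZMod.intCast_surjective (x * ((hd.unit⁻¹ : (ZMod n)ˣ) : ZMod n))
  have hx : m • d = x := by rw [zsmul_eq_mul, hm, mul_assoc, hd.val_inv_mul, mul_one]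
  simpa [hx] using hf.zsmul m 0

theorem ZMod.natCast_ne_zero_of_lt {n m : ℕ} (hm : m ≠ 0) (hn : n = 0 ∨ m < n) :
    (m : ZMod n) ≠ 0 := by
  rw [Ne, ZMod.natCast_eq_zero_iff]
  intro hdvd
  rcases hn with rfl | hn
  · exact hm (zero_dvd_iff.mp hdvd)
  · exact absurd (Nat.le_of_dvd (Nat.pos_of_ne_zero hm) hdvd) (by omega)

theorem ZMod.exists_notMem_finset {n k : ℕ} (hn : n = 0 ∨ k < n)
    (s : Finset (ZMod n)) (hs : s.card ≤ k) : ∃ x, x ∉ s := by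
  rcases hn with rfl | hn
  · exact Infinite.exists_notMem_finset s
  · have : NeZero n := ⟨by omega⟩
    obtain ⟨x, -, hx⟩ := Finset.exists_mem_notMem_of_card_lt_card
      (s := s) (t := Finset.univ) (by rw [Finset.card_univ, ZMod.card]; omega)
    exact ⟨x, hx⟩

/-- Outside `1 ≤ n ≤ 4` some `x` has `x` and `x + 1` both fixed by the transposition, so the
conjugated translation is again `· + 1`; evaluating it at `u` then forces `v = u + 1 = u - 1`. -/
theorem mem_Icc_of_swap_conj_addRight_one_mem_transSub {n : ℕ} {u v : ZMod n} (huv : u ≠ v)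
    (h : swap u v * Equiv.addRight 1 * (swap u v)⁻¹ ∈ transSub n) : n ∈ Set.Icc 1 4 := by
  obtain ⟨k, hk⟩ := h
  replace hk : ∀ x, swap u v (swap u v x + 1) = x + k := by
    simpa [Perm.mul_apply, swap_inv] using hk
  by_contra hn
  replace hn : n = 0 ∨ 4 < n := by rw [Set.mem_Icc] at hn; omega
  have h1 : (1 : ZMod n) ≠ 0 := by exact_mod_cast ZMod.natCast_ne_zero_of_lt one_ne_zero (by omega)
  have h2 : (2 : ZMod n) ≠ 0 := by exact_mod_cast ZMod.natCast_ne_zero_of_lt two_ne_zero (by omega)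
  obtain ⟨x, hx⟩ := ZMod.exists_notMem_finset hn {u, v, u - 1, v - 1}
    Finset.card_le_four
  simp only [Finset.mem_insert, Finset.mem_singleton, not_or] at hx
  obtain ⟨hxu, hxv, hxu', hxv'⟩ := hx
  have hk1 : k = 1 := by
    have := hk x
    rwa [swap_apply_of_ne_of_ne hxu hxv, swap_apply_of_ne_of_ne (fun h => hxu' (eq_sub_of_add_eq h))
      (fun h => hxv' (eq_sub_of_add_eq h)),
      add_left_cancel_iff, eq_comm] at this
  have hu := hk u
  rw [swap_apply_left, hk1] at hu
  by_cases hvu : v + 1 = u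
  · rw [hvu, swap_apply_left] at hu
    exact h2 (by linear_combination hvu - hu)
  · rw [swap_apply_of_ne_of_ne hvu (by simpa using h1)] at hu
    exact huv (add_right_cancel hu).symm

theorem ZMod.four_eq_of_periodic_two {S : Set (ZMod 4)} (hne : S.Nonempty) (h0 : 0 ∉ S)
    (hper : Function.Periodic (· ∈ S) 2) : S = {1, 3} := by
  have hper' (x : ZMod 4) : x + 2 ∈ S ↔ x ∈ S := Iff.of_eq (hper x)
  have h2 : (2 : ZMod 4) ∉ S := fun h => h0 ((hper' 2).mpr h)
  have hsub : S ⊆ {1, 3} := by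
    intro s hs
    fin_cases s
    exacts [absurd hs h0, Or.inl rfl, absurd hs h2, Or.inr rfl]
  obtain ⟨s, hs⟩ := hne
  have h13 : (1 : ZMod 4) ∈ S ∧ (3 : ZMod 4) ∈ S := by
    rcases hsub hs with rfl | rfl
    exacts [⟨hs, (hper' 1).mpr hs⟩, ⟨(hper' 1).mp hs, hs⟩]
  exact hsub.antisymm (Set.insert_subset_iff.mpr ⟨h13.1, Set.singleton_subset_iff.mpr h13.2⟩)

theorem stmt14_general (n : ℕ) (S : Set (ZMod n)) (hne : S.Nonempty)
    (h0 : (0 : ZMod n) ∉ S)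
    (hnorm : ∀ e ∈ autGroup (zcayAdj n S), ∀ h ∈ transSub n, e * h * e⁻¹ ∈ transSub n)
    (hthick : RThick (zcayAdj n S)) :
    DigraphIso (zcayAdj n S) C4Adj := by
  obtain ⟨u, v, huv, hout, hin⟩ := hthick
  have hper := periodic_of_zcayAdj_outTwins hout
  have hnotUnit : ¬ IsUnit (u - v) := fun hd =>
    hne.elim fun s hs => h0 (hper.eq_apply_zero_of_isUnit hd s ▸ hs)
  obtain ⟨hn1, hn4⟩ := mem_Icc_of_swap_conj_addRight_one_mem_transSub huv <|
    hnorm _ (isDigraphAut_swap_of_twins hout hin) _ ⟨1, fun _ => rfl⟩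
  have hd : u - v ≠ 0 := sub_ne_zero.mpr huv
  interval_cases n
  · exact absurd (Subsingleton.elim u v) huv
  · exact absurd hd.isUnit hnotUnit
  · exact absurd hd.isUnit hnotUnit
  · obtain h | h | h | h := (by decide : ∀ d : ZMod 4, d = 0 ∨ d = 1 ∨ d = 2 ∨ d = 3) (u - v)
    · exact absurd h hd
    · exact absurd (h ▸ isUnit_one) hnotUnit
    · rw [ZMod.four_eq_of_periodic_two hne h0 (h ▸ hper)]
      exact ⟨Equiv.refl _, fun _ _ => Iff.rfl⟩
    · exact absurd (h ▸ IsUnit.of_mul_eq_one (3 : ZMod 4) rfl) hnotUnit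

theorem stmt14 (n : ℕ) (hn : 1 ≤ n) (S : Set (ZMod n)) (hne : S.Nonempty)
    (h0 : (0 : ZMod n) ∉ S)
    (hnorm : ∀ e ∈ autGroup (zcayAdj n S), ∀ h ∈ transSub n, e * h * e⁻¹ ∈ transSub n)
    (hthick : RThick (zcayAdj n S)) :
    DigraphIso (zcayAdj n S) C4Adj :=
  stmt14_general n S hne h0 hnorm hthick
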